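/- Let p be a local two-input two-output box with p(0,1|1,1) = p(1,0|1,1) = 0 (perfectly correlated outcomes on inputs x=y=1), p(0,0|0,0) > 0, Σ_b p(0,b|0,1) > 0 and Σ_a p(a,0|1,0) > 0. Let q_A, q_B ∈ [0,1] satisfy p(0,1|0,1) = q_A·Σ_b p(0,b|0,1) and p(1,0|1,0) = q_B·Σ_a p(a,0|1,0). If 0 ∈ α_n and 0 ∈ β_n for every n ∈ ℕ (i.e., q_A and q_B are common certainty between the observers at the event (a=0,b=0,x=0,y=0)), then q_A = q_B. -/

import Mathlib

open Kronecker ComplexOrder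

/-- A (bipartite) box: nonnegative entries, normalized for every input pair. -/
def IsBox {nA nB nX nY : ℕ} (p : Fin nA → Fin nB → Fin nX → Fin nY → ℝ) : Prop :=
  (∀ a b x y, 0 ≤ p a b x y) ∧ (∀ x y, (∑ a, ∑ b, p a b x y) = 1)

/-- No-signaling: each party's marginal does not depend on the other's input. -/
def NoSignaling {nA nB nX nY : ℕ} (p : Fin nA → Fin nB → Fin nX → Fin nY → ℝ) : Prop :=
  (∀ b y x x', (∑ a, p a b x y) = ∑ a, p a b x' y) ∧
  (∀ a x y y', (∑ b, p a b x y) = ∑ b, p a b x y')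

/-- Local (classical) box: a convex mixture of product deterministic/stochastic strategies. -/
def IsLocal {nA nB nX nY : ℕ} (p : Fin nA → Fin nB → Fin nX → Fin nY → ℝ) : Prop :=
  ∃ (Λ : ℕ) (w : Fin Λ → ℝ) (pA : Fin nA → Fin nX → Fin Λ → ℝ)
    (pB : Fin nB → Fin nY → Fin Λ → ℝ),
    (∀ l, 0 ≤ w l) ∧ ((∑ l, w l) = 1) ∧
    (∀ a x l, 0 ≤ pA a x l) ∧ (∀ x l, (∑ a, pA a x l) = 1) ∧
    (∀ b y l, 0 ≤ pB b y l) ∧ (∀ y l, (∑ b, pB b y l) = 1) ∧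
    (∀ a b x y, p a b x y = ∑ l, w l * pA a x l * pB b y l)

/-- Quantum box: realized by POVMs on a bipartite quantum state. -/
def IsQuantum {nA nB nX nY : ℕ} (p : Fin nA → Fin nB → Fin nX → Fin nY → ℝ) : Prop :=
  ∃ (dA dB : ℕ) (_ : 0 < dA) (_ : 0 < dB)
    (ρ : Matrix (Fin dA × Fin dB) (Fin dA × Fin dB) ℂ)
    (E : Fin nX → Fin nA → Matrix (Fin dA) (Fin dA) ℂ)
    (F : Fin nY → Fin nB → Matrix (Fin dB) (Fin dB) ℂ),
    ρ.PosSemidef ∧ ρ.trace = 1 ∧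
    (∀ x a, (E x a).PosSemidef) ∧ (∀ x, (∑ a, E x a) = 1) ∧
    (∀ y b, (F y b).PosSemidef) ∧ (∀ y, (∑ b, F y b) = 1) ∧
    (∀ a b x y, ((E x a ⊗ₖ F y b) * ρ).trace = (p a b x y : ℂ))

open Classical in
/-- The certainty hierarchy `(α_n, β_n)` of the agreement framework:
`α₀` are Alice's outputs (on input `x = 0`) from which she assigns conditional
probability `qA` to Bob outputting `1` on input `y = 1`; `β₀` is the analogue
for Bob; and at each later stage each party is moreover certain (on inputs
`x = y = 0`) that the other's output lies in the previous stage's set. -/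
noncomputable def alphaBeta {nA nB nX nY : ℕ} [NeZero nA] [NeZero nB] [NeZero nX] [NeZero nY]
    (p : Fin nA → Fin nB → Fin nX → Fin nY → ℝ) (qA qB : ℝ) :
    ℕ → Set (Fin nA) × Set (Fin nB)
  | 0 =>
      ({a | 0 < (∑ b, p a b 0 1) ∧ p a 1 0 1 = qA * (∑ b, p a b 0 1)},
       {b | 0 < (∑ a, p a b 1 0) ∧ p 1 b 1 0 = qB * (∑ a, p a b 1 0)})
  | n + 1 =>
      ({a | a ∈ (alphaBeta p qA qB n).1 ∧ 0 < (∑ b, p a b 0 0) ∧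
            (∑ b, if b ∈ (alphaBeta p qA qB n).2 then p a b 0 0 else 0) = ∑ b, p a b 0 0},
       {b | b ∈ (alphaBeta p qA qB n).2 ∧ 0 < (∑ a, p a b 0 0) ∧
            (∑ a, if a ∈ (alphaBeta p qA qB n).1 then p a b 0 0 else 0) = ∑ a, p a b 0 0})

/-- The box gives rise to common certainty of disagreement: for some `qA ≠ qB` in `[0,1]`,
the outputs on inputs `x = y = 1` are perfectly correlated, the event
`(a,b,x,y) = (0,0,0,0)` has positive probability, and `0 ∈ α_n`, `0 ∈ β_n` for every `n`. -/
def CommonCertaintyOfDisagreement {nA nB nX nY : ℕ}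
    [NeZero nA] [NeZero nB] [NeZero nX] [NeZero nY]
    (p : Fin nA → Fin nB → Fin nX → Fin nY → ℝ) : Prop :=
  ∃ qA qB : ℝ, qA ∈ Set.Icc (0:ℝ) 1 ∧ qB ∈ Set.Icc (0:ℝ) 1 ∧ qA ≠ qB ∧
    (∀ (a : Fin nA) (b : Fin nB), (a : ℕ) ≠ (b : ℕ) → p a b 1 1 = 0) ∧ 0 < p 0 0 0 0 ∧
    (∀ n : ℕ, (0 : Fin nA) ∈ (alphaBeta p qA qB n).1 ∧ (0 : Fin nB) ∈ (alphaBeta p qA qB n).2)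

/-- The box gives rise to singular disagreement: perfectly correlated outputs on inputs
`x = y = 1`, positive probability of `(0,0,0,0)`, Alice assigns conditional probability
`qA = 1` to `b = 1` given `a = 0, x = 0, y = 1`, and Bob assigns conditional probability
`qB = 0` to `a = 1` given `b = 0, x = 1, y = 0`. -/
def SingularDisagreement {nA nB nX nY : ℕ}
    [NeZero nA] [NeZero nB] [NeZero nX] [NeZero nY]
    (p : Fin nA → Fin nB → Fin nX → Fin nY → ℝ) : Prop :=
  (∀ (a : Fin nA) (b : Fin nB), (a : ℕ) ≠ (b : ℕ) → p a b 1 1 = 0) ∧ 0 < p 0 0 0 0 ∧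
  (0 < ∑ b, p 0 b 0 1) ∧ (p 0 1 0 1 = ∑ b, p 0 b 0 1) ∧
  (0 < ∑ a, p a 0 1 0) ∧ (p 1 0 1 0 = 0)

/-!
Let `Sa = ⋂ₙ αₙ` and `Sb = ⋂ₙ βₙ`. Common certainty makes `p(a,b|0,0)` vanish unless
`a ∈ Sa ↔ b ∈ Sb`; in a local model this forces the events `a ∈ Sa` (on `x = 0`) and `b ∈ Sb`
(on `y = 0`) to coincide for almost every hidden variable, just as `a = 1` and `b = 1` coincide
on `x = y = 1`. Hence `p(a ∈ Sa, b = 1 | 0,1) = p(a = 1, b ∈ Sb | 1,0)` and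
`p(a ∈ Sa | x = 0) = p(b ∈ Sb | y = 0) > 0`. Summing the equations defining `α₀` over `Sa`
and those defining `β₀` over `Sb` then gives `qA · P = qB · P` for the same positive `P`.
-/

open Finset

theorem weighted_sum_eq_of_cross_eq_zero {ι κ : Type*} [Fintype ι] [Fintype κ]
    {w : ℝ} {f : ι → ℝ} {g : κ → ℝ} (hf : ∑ i, f i = 1) (hg : ∑ j, g j = 1)
    {S : Finset ι} {T : Finset κ} (h : ∀ i j, w * (f i * g j) ≠ 0 → (i ∈ S ↔ j ∈ T)) :
    w * ∑ i ∈ S, f i = w * ∑ j ∈ T, g j := by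
  classical
  have cross {S' : Finset ι} {T' : Finset κ} (hST : ∀ i ∈ S', ∀ j ∈ T', ¬(i ∈ S ↔ j ∈ T)) :
      w * ((∑ i ∈ S', f i) * ∑ j ∈ T', g j) = 0 := by
    rw [sum_mul_sum, mul_sum]
    refine sum_eq_zero fun i hi => ?_
    rw [mul_sum]
    exact sum_eq_zero fun j hj => not_not.1 fun hne => hST i hi j hj (h i j hne)
  have h₁ := cross (S' := S) (T' := Tᶜ) fun i hi j hj => by simp_all
  have h₂ := cross (S' := Sᶜ) (T' := T) fun i hi j hj => by simp_all
  have hS : ∑ i ∈ Sᶜ, f i + ∑ i ∈ S, f i = 1 := hf ▸ sum_compl_add_sum S f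
  have hT : ∑ j ∈ Tᶜ, g j + ∑ j ∈ T, g j = 1 := hg ▸ sum_compl_add_sum T g
  linear_combination h₁ - h₂ + w * (∑ j ∈ T, g j) * hS - w * (∑ i ∈ S, f i) * hT

/-- On inputs `(x, y)`, Alice's event `a ∈ S` and Bob's event `b ∈ T` coincide almost surely. -/
def PerfectlyCorrelated {nA nB nX nY : ℕ} (p : Fin nA → Fin nB → Fin nX → Fin nY → ℝ)
    (x : Fin nX) (y : Fin nY) (S : Finset (Fin nA)) (T : Finset (Fin nB)) : Prop :=
  ∀ a b, p a b x y ≠ 0 → (a ∈ S ↔ b ∈ T)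

namespace IsLocal

variable {nA nB nX nY : ℕ} {p : Fin nA → Fin nB → Fin nX → Fin nY → ℝ}

theorem nonneg (hloc : IsLocal p) (a : Fin nA) (b : Fin nB) (x : Fin nX) (y : Fin nY) :
    0 ≤ p a b x y := by
  obtain ⟨Λ, w, pA, pB, hw, -, hpA, -, hpB, -, hp⟩ := hloc
  rw [hp]
  exact sum_nonneg fun l _ => mul_nonneg (mul_nonneg (hw l) (hpA a x l)) (hpB b y l)

theorem sum_sum_eq_of_perfectlyCorrelated (hloc : IsLocal p) {x x' : Fin nX} {y y' : Fin nY}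
    {S S' : Finset (Fin nA)} {T T' : Finset (Fin nB)}
    (h : PerfectlyCorrelated p x y S T) (h' : PerfectlyCorrelated p x' y' S' T') :
    ∑ a ∈ S, ∑ b ∈ T', p a b x y' = ∑ a ∈ S', ∑ b ∈ T, p a b x' y := by
  -- For each hidden variable `l`, Alice's probability of `S` on `x` equals Bob's of `T` on `y`
  -- (up to the weight `w l`), and likewise for `S'`, `T'`: both sides are then
  -- `∑ l, w l * P_A(S | x, l) * P_A(S' | x', l)`.
  obtain ⟨Λ, w, pA, pB, hw, -, hpA, hpA1, hpB, hpB1, hp⟩ := hloc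
  have expand (x : Fin nX) (y : Fin nY) (S : Finset (Fin nA)) (T : Finset (Fin nB)) :
      ∑ a ∈ S, ∑ b ∈ T, p a b x y = ∑ l, w l * (∑ a ∈ S, pA a x l) * ∑ b ∈ T, pB b y l := by
    simp_rw [hp, mul_assoc, sum_mul_sum, mul_sum]
    exact sum_comm_cycle
  have agree {x : Fin nX} {y : Fin nY} {S : Finset (Fin nA)} {T : Finset (Fin nB)}
      (h : PerfectlyCorrelated p x y S T) (l : Fin Λ) :
      w l * ∑ a ∈ S, pA a x l = w l * ∑ b ∈ T, pB b y l := by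
    refine weighted_sum_eq_of_cross_eq_zero (hpA1 x l) (hpB1 y l)
      fun a b hne => h a b fun hzero => ?_
    rw [hp, sum_eq_zero_iff_of_nonneg fun l _ =>
      mul_nonneg (mul_nonneg (hw l) (hpA a x l)) (hpB b y l)] at hzero
    exact hne (by rw [← mul_assoc]; exact hzero l (mem_univ l))
  rw [expand, expand]
  refine sum_congr rfl fun l _ => ?_
  linear_combination (∑ b ∈ T', pB b y' l) * agree h l - (∑ b ∈ T, pB b y l) * agree h' l

end IsLocal

theorem eq_zero_of_sum_ite_eq_sum {ι : Type*} [Fintype ι] {f : ι → ℝ} (hf : ∀ i, 0 ≤ f i)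
    {s : Set ι} [DecidablePred (· ∈ s)] (h : ∑ i, (if i ∈ s then f i else 0) = ∑ i, f i)
    {i : ι} (hi : i ∉ s) : f i = 0 := by
  have hgap : ∑ j, (f j - if j ∈ s then f j else 0) = 0 := by rw [sum_sub_distrib, h, sub_self]
  have hgap_nonneg (j : ι) : 0 ≤ f j - if j ∈ s then f j else 0 := by split_ifs <;> simp [hf]
  simpa [hi] using (sum_eq_zero_iff_of_nonneg fun j _ => hgap_nonneg j).1 hgap i (mem_univ i)

section alphaBeta

open Classical

variable {nA nB nX nY : ℕ} [NeZero nA] [NeZero nB] [NeZero nX] [NeZero nY]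
  {p : Fin nA → Fin nB → Fin nX → Fin nY → ℝ} {qA qB : ℝ}

theorem apply_eq_zero_of_mem_alphaBeta_succ_fst (hp : ∀ a b, 0 ≤ p a b 0 0) {n : ℕ} {a : Fin nA}
    {b : Fin nB} (ha : a ∈ (alphaBeta p qA qB (n + 1)).1) (hb : b ∉ (alphaBeta p qA qB n).2) :
    p a b 0 0 = 0 :=
  eq_zero_of_sum_ite_eq_sum (hp a) ha.2.2 hb

theorem apply_eq_zero_of_mem_alphaBeta_succ_snd (hp : ∀ a b, 0 ≤ p a b 0 0) {n : ℕ} {a : Fin nA}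
    {b : Fin nB} (hb : b ∈ (alphaBeta p qA qB (n + 1)).2) (ha : a ∉ (alphaBeta p qA qB n).1) :
    p a b 0 0 = 0 :=
  eq_zero_of_sum_ite_eq_sum (hp · b) hb.2.2 ha

variable (p qA qB) in
/-- The pair `(⋂ₙ αₙ, ⋂ₙ βₙ)`. -/
noncomputable def alphaBetaInf : Finset (Fin nA) × Finset (Fin nB) :=
  (univ.filter fun a => ∀ n, a ∈ (alphaBeta p qA qB n).1,
    univ.filter fun b => ∀ n, b ∈ (alphaBeta p qA qB n).2)

theorem mem_alphaBetaInf_fst {a : Fin nA} :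
    a ∈ (alphaBetaInf p qA qB).1 ↔ ∀ n, a ∈ (alphaBeta p qA qB n).1 := by
  simp [alphaBetaInf]

theorem mem_alphaBetaInf_snd {b : Fin nB} :
    b ∈ (alphaBetaInf p qA qB).2 ↔ ∀ n, b ∈ (alphaBeta p qA qB n).2 := by
  simp [alphaBetaInf]

theorem perfectlyCorrelated_alphaBetaInf (hp : ∀ a b, 0 ≤ p a b 0 0) :
    PerfectlyCorrelated p 0 0 (alphaBetaInf p qA qB).1 (alphaBetaInf p qA qB).2 := by
  intro a b hne
  rw [mem_alphaBetaInf_fst, mem_alphaBetaInf_snd]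
  constructor
  · exact fun ha n => not_not.1 fun hb => hne (apply_eq_zero_of_mem_alphaBeta_succ_fst hp (ha _) hb)
  · exact fun hb n => not_not.1 fun ha => hne (apply_eq_zero_of_mem_alphaBeta_succ_snd hp (hb _) ha)

end alphaBeta

theorem local_boxes_cannot_agree_to_disagree_general
    (p : Fin 2 → Fin 2 → Fin 2 → Fin 2 → ℝ)
    (hloc : IsLocal p)
    (hpc1 : p 0 1 1 1 = 0) (hpc2 : p 1 0 1 1 = 0)
    (h00 : 0 < p 0 0 0 0)
    (qA qB : ℝ)
    (hcc : ∀ n : ℕ, (0 : Fin 2) ∈ (alphaBeta p qA qB n).1 ∧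
                    (0 : Fin 2) ∈ (alphaBeta p qA qB n).2) :
    qA = qB := by
  set Sa := (alphaBetaInf p qA qB).1
  set Sb := (alphaBetaInf p qA qB).2
  have hcert : PerfectlyCorrelated p 0 0 Sa Sb :=
    perfectlyCorrelated_alphaBetaInf fun a b => hloc.nonneg a b 0 0
  have hpc : PerfectlyCorrelated p 1 1 {1} {1} := by
    intro a b hne
    fin_cases a <;> fin_cases b <;> simp_all
  have huniv (x y : Fin 2) : PerfectlyCorrelated p x y univ univ := by simp [PerfectlyCorrelated]
  have hestA : ∑ a ∈ Sa, ∑ b ∈ {1}, p a b 0 1 = qA * ∑ a ∈ Sa, ∑ b, p a b 0 1 := by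
    rw [mul_sum]
    exact sum_congr rfl fun a ha => by rw [sum_singleton]; exact (mem_alphaBetaInf_fst.1 ha 0).2
  have hestB : ∑ a ∈ {1}, ∑ b ∈ Sb, p a b 1 0 = qB * ∑ a, ∑ b ∈ Sb, p a b 1 0 := by
    rw [sum_singleton, sum_comm, mul_sum]
    exact sum_congr rfl fun b hb => (mem_alphaBetaInf_snd.1 hb 0).2
  have hpos : 0 < ∑ a ∈ Sa, ∑ b, p a b 0 1 := by
    rw [hloc.sum_sum_eq_of_perfectlyCorrelated hcert (huniv 0 1)]
    calc 0 < p 0 0 0 0 := h00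
      _ ≤ ∑ b ∈ Sb, p 0 b 0 0 :=
        single_le_sum (fun b _ => hloc.nonneg 0 b 0 0) (mem_alphaBetaInf_snd.2 fun n => (hcc n).2)
      _ ≤ ∑ a, ∑ b ∈ Sb, p a b 0 0 :=
        single_le_sum (fun a _ => sum_nonneg fun b _ => hloc.nonneg a b 0 0) (mem_univ 0)
  refine mul_right_cancel₀ hpos.ne' ?_
  rw [← hestA, hloc.sum_sum_eq_of_perfectlyCorrelated hcert hpc, hestB,
    hloc.sum_sum_eq_of_perfectlyCorrelated hcert (huniv 1 1)]

/-- Classical agreement theorem for local two-input two-output boxes: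
if the (conditional) estimates `qA`, `qB` of the perfectly correlated events of interest
are common certainty at the event `(a,b,x,y) = (0,0,0,0)`, then `qA = qB`. -/
theorem local_boxes_cannot_agree_to_disagree
    (p : Fin 2 → Fin 2 → Fin 2 → Fin 2 → ℝ)
    (hbox : IsBox p) (hloc : IsLocal p)
    (hpc1 : p 0 1 1 1 = 0) (hpc2 : p 1 0 1 1 = 0)
    (h00 : 0 < p 0 0 0 0)
    (hmA : 0 < ∑ b, p 0 b 0 1) (hmB : 0 < ∑ a, p a 0 1 0)
    (qA qB : ℝ) (hqA : qA ∈ Set.Icc (0:ℝ) 1) (hqB : qB ∈ Set.Icc (0:ℝ) 1)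
    (hA : p 0 1 0 1 = qA * (∑ b, p 0 b 0 1))
    (hB : p 1 0 1 0 = qB * (∑ a, p a 0 1 0))
    (hcc : ∀ n : ℕ, (0 : Fin 2) ∈ (alphaBeta p qA qB n).1 ∧
                    (0 : Fin 2) ∈ (alphaBeta p qA qB n).2) :
    qA = qB :=
  local_boxes_cannot_agree_to_disagree_general p hloc hpc1 hpc2 h00 qA qB hcc
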